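/- Let $n \ge 1$, $p \in (0, \infty)$, and let $F : \mathbb{R}^{n+1}_+ \to [0,\infty)$ be measurable. Suppose $N : \mathbb{R}^n \to [0,\infty)$ is measurable, belongs to $L^p(\mathbb{R}^n)$, and satisfies $F(z, s) \le N(z')$ whenever $|z - z'| < s$. Then there is a constant $C = C(n, p)$ such that for every $x \in \mathbb{R}^n$ and $r > 0$, $\frac{1}{r^n} \int_{|x - z| < r} \int_0^{2r} F(z, s)^{p/n}\, ds\, dz \le C\, \|N\|_{L^p(\mathbb{R}^n)}^{p/n}$. In other words, the measure $d\mu(z,s) := F(z,s)^{p/n}\, dz\, ds$ on $\mathbb{R}^{n+1}_+$ is a Carleson measure with $\|\mu\|_{\mathcal C} \le C \|N\|_{L^p}^{p/n}$. -/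

import Mathlib

/-!
For a fixed height `s`, non-tangential domination gives `F(z,s)^p ≤ ⨍_{B(z,s)} N^p`, and averaging
over balls of a fixed radius preserves the Lebesgue integral (Fubini), so
`∫ F(·,s)^p ≤ ‖N‖_p^p`. Hölder's inequality on `B(x,r)` turns this into
`∫_{B(x,r)} F(·,s)^{p/n} ≤ ‖N‖_p^{p/n} |B(x,r)|^{1-1/n} ∼ ‖N‖_p^{p/n} r^{n-1}`, and integrating
over `s ∈ (0,2r)` supplies the missing factor `r`.
-/

open MeasureTheory ENNReal Metric Set

theorem lintegral_rpow_le_lintegral_rpow_mul_measure_univ {α : Type*} [MeasurableSpace α]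
    {μ : Measure α} {f : α → ℝ≥0∞} (hf : AEMeasurable f μ) {θ : ℝ} (hθ0 : 0 < θ) (hθ1 : θ ≤ 1) :
    ∫⁻ a, f a ^ θ ∂μ ≤ (∫⁻ a, f a ∂μ) ^ θ * μ univ ^ (1 - θ) := by
  rcases hθ1.eq_or_lt with rfl | hθ1
  · simp
  have h := ENNReal.lintegral_mul_le_Lp_mul_Lq μ (Real.HolderConjugate.inv_one_sub_inv hθ0 hθ1)
    (hf.pow_const θ) (aemeasurable_const (b := (1 : ℝ≥0∞)))
  simpa [← ENNReal.rpow_mul, hθ0.ne'] using h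

theorem ofReal_integral_le_lintegral_ofReal {α : Type*} [MeasurableSpace α] {μ : Measure α}
    {f : α → ℝ} (hf : ∀ a, 0 ≤ f a) :
    ENNReal.ofReal (∫ a, f a ∂μ) ≤ ∫⁻ a, ENNReal.ofReal (f a) ∂μ :=
  (Real.ofReal_le_enorm _).trans <| (enorm_integral_le_lintegral_enorm f).trans_eq <|
    lintegral_congr fun a => Real.enorm_of_nonneg (hf a)

theorem lintegral_setLIntegral_ball_eq {α : Type*} [PseudoMetricSpace α] [MeasurableSpace α]
    [OpensMeasurableSpace α] [SecondCountableTopology α] (μ : Measure α) [SFinite μ]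
    {g : α → ℝ≥0∞} (hg : Measurable g) (s : ℝ) :
    ∫⁻ z, ∫⁻ z' in ball z s, g z' ∂μ ∂μ = ∫⁻ z', g z' * μ (ball z' s) ∂μ := by
  set D := {q : α × α | dist q.2 q.1 < s}
  have hD : MeasurableSet D := measurableSet_lt (measurable_snd.dist measurable_fst) measurable_const
  calc ∫⁻ z, ∫⁻ z' in ball z s, g z' ∂μ ∂μ
      = ∫⁻ z, ∫⁻ z', D.indicator (fun q => g q.2) (z, z') ∂μ ∂μ := by
        congr! 2 with z
        rw [← lintegral_indicator measurableSet_ball]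
        rfl
    _ = ∫⁻ z', ∫⁻ z, D.indicator (fun q => g q.2) (z, z') ∂μ ∂μ :=
        lintegral_lintegral_swap ((hg.comp measurable_snd).indicator hD).aemeasurable
    _ = ∫⁻ z', g z' * μ (ball z' s) ∂μ := by
        congr! 2 with z'
        rw [← setLIntegral_const, ← lintegral_indicator measurableSet_ball]
        congr! 2 with z
        classical
        simp only [D, indicator_apply, mem_ofPred_eq, mem_ball, dist_comm]

theorem mul_pow_mul_rpow_one_sub_one_div {r κ : ℝ} (hr : 0 < r) (hκ : 0 ≤ κ) {n : ℕ}
    (hn : n ≠ 0) : r * (r ^ n * κ) ^ (1 - 1 / (n : ℝ)) = r ^ n * κ ^ (1 - 1 / (n : ℝ)) := by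
  have hr' : r = (r ^ n) ^ (1 / (n : ℝ)) := by
    rw [one_div, Real.pow_rpow_inv_natCast hr.le hn]
  rw [Real.mul_rpow (by positivity) hκ, ← mul_assoc]
  nth_rewrite 1 [hr']
  rw [← Real.rpow_add (by positivity), add_sub_cancel, Real.rpow_one]

section AddHaar

variable {E : Type*} [NormedAddCommGroup E] [NormedSpace ℝ E] [MeasurableSpace E] [BorelSpace E]
  [FiniteDimensional ℝ E] (μ : Measure E) [μ.IsAddHaarMeasure]

theorem lintegral_le_of_le_on_balls {G g : E → ℝ≥0∞} (hg : Measurable g) {s : ℝ} (hs : 0 < s)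
    (hGg : ∀ z z', dist z z' < s → G z ≤ g z') : ∫⁻ z, G z ∂μ ≤ ∫⁻ z, g z ∂μ := by
  set c := μ (ball (0 : E) s)
  have hc0 : c ≠ 0 := (measure_ball_pos μ 0 hs).ne'
  have hc : c ≠ ⊤ := measure_ball_lt_top.ne
  have hG : ∀ z, G z * c ≤ ∫⁻ z' in ball z s, g z' ∂μ := fun z => by
    rw [show c = μ (ball z s) from (Measure.addHaar_ball_center μ z s).symm, ← setLIntegral_const]
    exact setLIntegral_mono hg fun z' hz' => hGg z z' (mem_ball'.1 hz')
  refine (ENNReal.mul_le_mul_iff_left hc0 hc).1 ?_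
  calc (∫⁻ z, G z ∂μ) * c = ∫⁻ z, G z * c ∂μ := (lintegral_mul_const' _ _ hc).symm
    _ ≤ ∫⁻ z, ∫⁻ z' in ball z s, g z' ∂μ ∂μ := lintegral_mono hG
    _ = ∫⁻ z, g z * c ∂μ := by
      simp_rw [lintegral_setLIntegral_ball_eq μ hg, Measure.addHaar_ball_center μ _ s, c]
    _ = (∫⁻ z, g z ∂μ) * c := lintegral_mul_const _ hg

theorem lintegral_carlesonBox_le {G : E × ℝ → ℝ≥0∞} {g : E → ℝ≥0∞} (hG : Measurable G)
    (hg : Measurable g) (hGg : ∀ z s z', 0 < s → dist z z' < s → G (z, s) ≤ g z')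
    {q θ : ℝ} (hq : 0 ≤ q) (hθ0 : 0 < θ) (hθ1 : θ ≤ 1) (S : Set E) {T : Set ℝ}
    (hT : MeasurableSet T) (hT0 : T ⊆ Ioi 0) :
    ∫⁻ z in S, (∫⁻ s in T, G (z, s) ^ (q * θ)) ∂μ ≤
      volume T * (∫⁻ z, g z ^ q ∂μ) ^ θ * μ S ^ (1 - θ) := by
  have hslice : ∀ s ∈ T, ∫⁻ z in S, G (z, s) ^ (q * θ) ∂μ ≤
      (∫⁻ z, g z ^ q ∂μ) ^ θ * μ S ^ (1 - θ) := fun s hs => by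
    have hGs : Measurable fun z => G (z, s) ^ q :=
      (hG.comp (measurable_id.prodMk measurable_const)).pow_const q
    calc ∫⁻ z in S, G (z, s) ^ (q * θ) ∂μ
        = ∫⁻ z in S, (G (z, s) ^ q) ^ θ ∂μ := by simp_rw [ENNReal.rpow_mul]
      _ ≤ (∫⁻ z in S, G (z, s) ^ q ∂μ) ^ θ * μ S ^ (1 - θ) := by
        simpa using lintegral_rpow_le_lintegral_rpow_mul_measure_univ (μ := μ.restrict S)
          hGs.aemeasurable hθ0 hθ1
      _ ≤ (∫⁻ z, g z ^ q ∂μ) ^ θ * μ S ^ (1 - θ) := by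
        refine mul_le_mul_left (ENNReal.rpow_le_rpow ?_ hθ0.le) _
        exact (setLIntegral_le_lintegral S _).trans <| lintegral_le_of_le_on_balls μ
          (hg.pow_const q) (hT0 hs) fun z z' h => ENNReal.rpow_le_rpow (hGg z s z' (hT0 hs) h) hq
  calc ∫⁻ z in S, (∫⁻ s in T, G (z, s) ^ (q * θ)) ∂μ
      = ∫⁻ s in T, ∫⁻ z in S, G (z, s) ^ (q * θ) ∂μ :=
        lintegral_lintegral_swap (hG.pow_const _).aemeasurable
    _ ≤ ∫⁻ s in T, (∫⁻ z, g z ^ q ∂μ) ^ θ * μ S ^ (1 - θ) := setLIntegral_mono' hT hslice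
    _ = volume T * (∫⁻ z, g z ^ q ∂μ) ^ θ * μ S ^ (1 - θ) := by
      rw [setLIntegral_const, mul_comm, mul_assoc]

theorem integral_carlesonBox_le {F : E × ℝ → ℝ} {N : E → ℝ} (hF : Measurable F)
    (hN : Measurable N) (hF0 : ∀ Y, 0 ≤ F Y) (hN0 : ∀ z, 0 ≤ N z)
    (hFN : ∀ z s z', 0 < s → dist z z' < s → F (z, s) ≤ N z') {q θ : ℝ} (hq : 0 ≤ q)
    (hθ0 : 0 < θ) (hθ1 : θ ≤ 1) (hNq : Integrable (fun z => N z ^ q) μ) {S : Set E}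
    (hS : μ S ≠ ⊤) {T : Set ℝ} (hT : MeasurableSet T) (hT0 : T ⊆ Ioi 0) (hTfin : volume T ≠ ⊤) :
    ∫ z in S, (∫ s in T, F (z, s) ^ (q * θ)) ∂μ ≤
      volume.real T * (∫ z, N z ^ q ∂μ) ^ θ * μ.real S ^ (1 - θ) := by
  have hNq0 : ∀ z, 0 ≤ N z ^ q := fun z => Real.rpow_nonneg (hN0 z) q
  have hFθ0 : ∀ Y, 0 ≤ F Y ^ (q * θ) := fun Y => Real.rpow_nonneg (hF0 Y) _
  have hbox := lintegral_carlesonBox_le μ hF.ennreal_ofReal hN.ennreal_ofReal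
    (fun z s z' hs h => ENNReal.ofReal_le_ofReal (hFN z s z' hs h)) hq hθ0 hθ1 S hT hT0
  have hA : ∫⁻ z, ENNReal.ofReal (N z) ^ q ∂μ = ENNReal.ofReal (∫ z, N z ^ q ∂μ) := by
    rw [ofReal_integral_eq_lintegral_ofReal hNq (ae_of_all _ hNq0)]
    simp_rw [ENNReal.ofReal_rpow_of_nonneg (hN0 _) hq]
  have hFpow : ∀ Y, ENNReal.ofReal (F Y) ^ (q * θ) = ENNReal.ofReal (F Y ^ (q * θ)) :=
    fun Y => ENNReal.ofReal_rpow_of_nonneg (hF0 Y) (by positivity)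
  simp_rw [hFpow, hA] at hbox
  refine ((ENNReal.ofReal_le_iff_le_toReal ?_).1 (le_trans ?_ hbox)).trans_eq ?_
  · exact mul_ne_top (mul_ne_top hTfin (rpow_ne_top_of_nonneg hθ0.le ofReal_ne_top))
      (rpow_ne_top_of_nonneg (sub_nonneg.2 hθ1) hS)
  · exact (ofReal_integral_le_lintegral_ofReal fun z => integral_nonneg fun s => hFθ0 _).trans
      (lintegral_mono fun z => ofReal_integral_le_lintegral_ofReal fun s => hFθ0 _)
  · rw [toReal_mul, toReal_mul, ← toReal_rpow, ← toReal_rpow, toReal_ofReal (integral_nonneg hNq0)]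
    rfl

end AddHaar

/-- If `N ∈ L^p(ℝ^n)` dominates `F` non-tangentially, then
`dμ(z,s) = F(z,s)^{p/n} dz ds` is a Carleson measure on `ℝ^{n+1}_+` with
`‖μ‖_𝒞 ≤ C ‖N‖_{L^p}^{p/n}`. -/
theorem stmt_8 (n : ℕ) (hn : 1 ≤ n) (p : ℝ) (hp : 0 < p) :
    ∃ C : ℝ, 0 < C ∧
    ∀ (F : EuclideanSpace ℝ (Fin n) × ℝ → ℝ) (N : EuclideanSpace ℝ (Fin n) → ℝ),
      Measurable F → Measurable N →
      (∀ Y, 0 ≤ F Y) → (∀ x, 0 ≤ N x) →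
      Integrable (fun x => N x ^ p) volume →
      (∀ (z : EuclideanSpace ℝ (Fin n)) (s : ℝ) (z' : EuclideanSpace ℝ (Fin n)),
        0 < s → dist z z' < s → F (z, s) ≤ N z') →
      ∀ (x : EuclideanSpace ℝ (Fin n)) (r : ℝ), 0 < r →
        (1/r^n) * ∫ z in Metric.ball x r, (∫ s in Set.Ioo (0:ℝ) (2*r), F (z, s) ^ (p/(n:ℝ)))
          ≤ C * (∫ z, N z ^ p) ^ (1/(n:ℝ)) := by
  have hn0 : (0 : ℝ) < n := by exact_mod_cast hn
  set κ := volume.real (ball (0 : EuclideanSpace ℝ (Fin n)) 1)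
  have hκ : 0 < κ := ENNReal.toReal_pos (measure_ball_pos _ _ one_pos).ne' measure_ball_lt_top.ne
  refine ⟨2 * κ ^ (1 - 1 / (n : ℝ)), by positivity, fun F N hF hN hF0 hN0 hNp hdom x r hr => ?_⟩
  have hbox := integral_carlesonBox_le volume (S := ball x r) (T := Ioo 0 (2 * r))
    hF hN hF0 hN0 hdom hp.le (one_div_pos.2 hn0) (div_le_one_of_le₀ (by exact_mod_cast hn) hn0.le)
    hNp measure_ball_lt_top.ne measurableSet_Ioo (fun s hs => hs.1) measure_Ioo_lt_top.ne
  calc 1 / r ^ n * ∫ z in ball x r, ∫ s in Ioo 0 (2 * r), F (z, s) ^ (p / n)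
      ≤ 1 / r ^ n * (2 * r * (∫ z, N z ^ p) ^ (1 / (n : ℝ)) * (r ^ n * κ) ^ (1 - 1 / (n : ℝ))) := by
        gcongr
        simpa [measureReal_def, Measure.addHaar_ball_of_pos _ _ hr, hr.le, div_eq_mul_inv, κ]
          using hbox
    _ = 2 * κ ^ (1 - 1 / (n : ℝ)) * (∫ z, N z ^ p) ^ (1 / (n : ℝ)) := by
        rw [mul_right_comm, mul_assoc 2, mul_pow_mul_rpow_one_sub_one_div hr hκ.le (by omega)]
        field_simp
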